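/- arXiv:2104.03737 — 6 statements merged into one kernel-verified Lean document; each statement's English description precedes it below -/
import Mathlib

section
/- Suppose μ, ν ∈ Δ_d have all entries strictly positive, C ∈ ℝ^{d×d}, and λ > 0. Then the unique minimizer T* of ⟨T, C⟩ − (1/λ)·H(T) over Π(μ, ν) has all entries strictly positive: T*_{ij} > 0 for all i, j. -/
open Finset

/-- The probability simplex `Δ_d`: vectors with nonnegative entries summing to 1. -/
def probSimplex (d : ℕ) : Set (Fin d → ℝ) :=
  {a | (∀ i, 0 ≤ a i) ∧ ∑ i, a i = 1}

/-- The transport polytope `Π(μ, ν)`: nonnegative matrices with row sums `μ`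
and column sums `ν`. -/
def transportPolytope {d : ℕ} (μ ν : Fin d → ℝ) :
    Set (Matrix (Fin d) (Fin d) ℝ) :=
  {T | (∀ i j, 0 ≤ T i j) ∧ (∀ i, ∑ j, T i j = μ i) ∧ (∀ j, ∑ i, T i j = ν j)}

/-- The Frobenius inner product `⟨T, C⟩ = Σ_{i,j} T_{ij} C_{ij}`. -/
def frob {d : ℕ} (T C : Matrix (Fin d) (Fin d) ℝ) : ℝ :=
  ∑ i, ∑ j, T i j * C i j

/-- The entropy `H(T) = −Σ_{i,j} T_{ij} log T_{ij}` (with `Real.log 0 = 0`,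
so the convention `0 · log 0 = 0` holds automatically). -/
noncomputable def matEntropy {d : ℕ} (T : Matrix (Fin d) (Fin d) ℝ) : ℝ :=
  -∑ i, ∑ j, T i j * Real.log (T i j)

/-- If `μ, ν` have strictly positive entries, then any minimizer of the
entropy-regularized problem over `Π(μ, ν)` has strictly positive entries. -/
theorem stmt_6 (d : ℕ) (hd : 1 ≤ d) (μ ν : Fin d → ℝ)
    (hμ : μ ∈ probSimplex d) (hν : ν ∈ probSimplex d)
    (hμpos : ∀ i, 0 < μ i) (hνpos : ∀ j, 0 < ν j)
    (C : Matrix (Fin d) (Fin d) ℝ) (lam : ℝ) (hlam : 0 < lam)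
    (Tstar : Matrix (Fin d) (Fin d) ℝ) (hTmem : Tstar ∈ transportPolytope μ ν)
    (hTmin : ∀ S ∈ transportPolytope μ ν,
      frob Tstar C - (1 / lam) * matEntropy Tstar ≤
        frob S C - (1 / lam) * matEntropy S) :
    ∀ i j, 0 < Tstar i j := by
  by_contra h
  push_neg at h
  obtain ⟨i, j, hij⟩ := h
  obtain ⟨hTnn, hTrow, hTcol⟩ := hTmem
  have haij : Tstar i j = 0 := le_antisymm hij (hTnn i j)
  set b : Matrix (Fin d) (Fin d) ℝ := fun k l => μ k * ν l with hb
  set φ : ℝ → ℝ := fun x => x * Real.log x with hφ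
  have hlaminv : (0:ℝ) < 1 / lam := by positivity
  have hbij : (0:ℝ) < μ i * ν j := mul_pos (hμpos i) (hνpos j)
  set c : ℝ := (1 / lam) * (μ i * ν j) with hc
  have hcpos : (0:ℝ) < c := mul_pos hlaminv hbij
  set K : ℝ := (frob b C - frob Tstar C) +
      (1 / lam) * ((∑ k, ∑ l, φ (b k l)) - (∑ k, ∑ l, φ (Tstar k l))) with hK
  -- main inequality for t ∈ (0,1]
  have key : ∀ t : ℝ, 0 < t → t ≤ 1 → 0 ≤ K + c * Real.log t := by
    intro t ht ht1
    set S : Matrix (Fin d) (Fin d) ℝ :=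
      fun k l => (1 - t) * Tstar k l + t * b k l with hS
    have hSmem : S ∈ transportPolytope μ ν := by
      refine ⟨fun k l => ?_, fun k => ?_, fun l => ?_⟩
      · exact add_nonneg (mul_nonneg (by linarith) (hTnn k l))
          (mul_nonneg ht.le (mul_nonneg (hμpos k).le (hνpos l).le))
      · have h1 : ∑ l, μ k * ν l = μ k * ∑ l, ν l := (Finset.mul_sum _ _ _).symm
        simp only [hS, hb, Finset.sum_add_distrib, ← Finset.mul_sum, hTrow k, h1, hν.2]
        ring
      · have h1 : ∑ k, μ k * ν l = (∑ k, μ k) * ν l := (Finset.sum_mul _ _ _).symm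
        simp only [hS, hb, Finset.sum_add_distrib, ← Finset.mul_sum, ← Finset.sum_mul,
          hTcol l, h1, hμ.2]
        ring
    have hmin := hTmin S hSmem
    -- frob linearity
    have hfrob : frob S C = (1 - t) * frob Tstar C + t * frob b C := by
      simp only [frob, Finset.mul_sum, ← Finset.sum_add_distrib]
      refine Finset.sum_congr rfl fun k _ => ?_
      refine Finset.sum_congr rfl fun l _ => ?_
      simp only [hS]; ring
    -- pointwise entropy bound
    have hpt : ∀ k l, φ (S k l) ≤ (1 - t) * φ (Tstar k l) + t * φ (b k l) +
        (if k = i ∧ l = j then t * (μ i * ν j) * Real.log t else 0) := by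
      intro k l
      by_cases hkl : k = i ∧ l = j
      · obtain ⟨rfl, rfl⟩ := hkl
        rw [if_pos ⟨rfl, rfl⟩]
        simp only [hS, hφ, hb, haij, mul_zero, zero_add, Real.log_zero]
        rw [Real.log_mul (ne_of_gt ht) (ne_of_gt hbij)]
        ring_nf
        exact le_rfl
      · rw [if_neg hkl, add_zero]
        have hcv := Real.convexOn_mul_log.2 (Set.mem_Ici.mpr (hTnn k l))
          (Set.mem_Ici.mpr (mul_nonneg (hμpos k).le (hνpos l).le))
          (by linarith : (0:ℝ) ≤ 1 - t) ht.le (by ring)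
        simpa [hS, hφ, hb, smul_eq_mul] using hcv
    have hsum : (∑ k, ∑ l, φ (S k l)) ≤
        (1 - t) * (∑ k, ∑ l, φ (Tstar k l)) + t * (∑ k, ∑ l, φ (b k l)) +
        t * (μ i * ν j) * Real.log t := by
      have hite : (∑ k, ∑ l, (if k = i ∧ l = j then t * (μ i * ν j) * Real.log t else 0))
          = t * (μ i * ν j) * Real.log t := by
        simp [ite_and, Finset.sum_ite_eq', Finset.mem_univ]
      calc (∑ k, ∑ l, φ (S k l))
          ≤ ∑ k, ∑ l, ((1 - t) * φ (Tstar k l) + t * φ (b k l) +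
            (if k = i ∧ l = j then t * (μ i * ν j) * Real.log t else 0)) := by
            refine Finset.sum_le_sum fun k _ => Finset.sum_le_sum fun l _ => hpt k l
        _ = (1 - t) * (∑ k, ∑ l, φ (Tstar k l)) + t * (∑ k, ∑ l, φ (b k l)) +
            t * (μ i * ν j) * Real.log t := by
            simp only [Finset.sum_add_distrib, Finset.mul_sum, hite]
    -- combine
    rw [matEntropy, matEntropy, hfrob] at hmin
    have hmin2 : (1/lam) * (∑ k, ∑ l, φ (S k l)) ≤
        (1/lam) * ((1 - t) * (∑ k, ∑ l, φ (Tstar k l)) + t * (∑ k, ∑ l, φ (b k l)) +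
        t * (μ i * ν j) * Real.log t) := mul_le_mul_of_nonneg_left hsum hlaminv.le
    have hmin3 : frob Tstar C - (1/lam) * (-(∑ k, ∑ l, φ (Tstar k l))) ≤
        (1 - t) * frob Tstar C + t * frob b C - (1/lam) * (-(∑ k, ∑ l, φ (S k l))) := by
      simpa [hφ] using hmin
    have htE : 0 ≤ t * (K + c * Real.log t) := by
      have : t * (K + c * Real.log t) =
        ((1 - t) * frob Tstar C + t * frob b C - (1/lam) * (-(∑ k, ∑ l, φ (S k l))))
        - (frob Tstar C - (1/lam) * (-(∑ k, ∑ l, φ (Tstar k l))))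
        + ((1/lam) * ((1 - t) * (∑ k, ∑ l, φ (Tstar k l)) + t * (∑ k, ∑ l, φ (b k l)) +
            t * (μ i * ν j) * Real.log t) - (1/lam) * (∑ k, ∑ l, φ (S k l))) := by
        rw [hK, hc]; ring
      rw [this]
      have h1 : 0 ≤ ((1 - t) * frob Tstar C + t * frob b C
          - (1/lam) * (-(∑ k, ∑ l, φ (S k l))))
          - (frob Tstar C - (1/lam) * (-(∑ k, ∑ l, φ (Tstar k l)))) := by linarith
      linarith
    nlinarith [htE, ht]
  -- choose small t to contradict
  set t0 : ℝ := min 1 (Real.exp (-(|K| + 1) / c)) with ht0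
  have ht0pos : 0 < t0 := lt_min one_pos (Real.exp_pos _)
  have ht0le : t0 ≤ 1 := min_le_left _ _
  have hlogt0 : Real.log t0 ≤ -(|K| + 1) / c := by
    calc Real.log t0 ≤ Real.log (Real.exp (-(|K| + 1) / c)) :=
          Real.log_le_log ht0pos (min_le_right _ _)
      _ = -(|K| + 1) / c := Real.log_exp _
  have hfin := key t0 ht0pos ht0le
  have : c * Real.log t0 ≤ -(|K| + 1) := by
    have := mul_le_mul_of_nonneg_left hlogt0 hcpos.le
    rwa [mul_div_cancel₀ _ (ne_of_gt hcpos)] at this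
  have hKabs : K ≤ |K| := le_abs_self K
  linarith
end

section
/- (Sinkhorn Algorithm, Theorem 1.) Suppose μ, ν ∈ Δ_d have all entries strictly positive, C ∈ ℝ^{d×d}, λ > 0, and let G = exp(−λC) be the entrywise exponential, G_{ij} = exp(−λ C_{ij}). Then the unique minimizer T* of the entropy-regularized problem min_{T ∈ Π(μ,ν)} ⟨T, C⟩ − (1/λ)·H(T) can be written as T* = diag(u) · G · diag(v) for some vectors u, v ∈ ℝ^d with strictly positive entries. -/
open Finset

noncomputable def entFun (x : ℝ) : ℝ := x * Real.log x

lemma frob_pairs {d : ℕ} (X Y : Matrix (Fin d) (Fin d) ℝ) :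
    frob X Y = ∑ p : Fin d × Fin d, X p.1 p.2 * Y p.1 p.2 := by
  rw [frob]; exact (Fintype.sum_prod_type (fun p : Fin d × Fin d => X p.1 p.2 * Y p.1 p.2)).symm

lemma matEntropy_pairs {d : ℕ} (X : Matrix (Fin d) (Fin d) ℝ) :
    matEntropy X = -∑ p : Fin d × Fin d, entFun (X p.1 p.2) := by
  rw [matEntropy, Fintype.sum_prod_type]; rfl

lemma sinkhorn_pos {d : ℕ} {μ ν : Fin d → ℝ}
    (hμ1 : ∑ i, μ i = 1) (hν1 : ∑ j, ν j = 1)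
    (hμpos : ∀ i, 0 < μ i) (hνpos : ∀ j, 0 < ν j)
    {C : Matrix (Fin d) (Fin d) ℝ} {lam : ℝ} (hlam : 0 < lam)
    {T : Matrix (Fin d) (Fin d) ℝ} (hTmem : T ∈ transportPolytope μ ν)
    (hTmin : ∀ S ∈ transportPolytope μ ν,
      frob T C - (1 / lam) * matEntropy T ≤ frob S C - (1 / lam) * matEntropy S) :
    ∀ a b, 0 < T a b := by
  intro a b
  rcases (hTmem.1 a b).lt_or_eq with hlt | hz
  · exact hlt
  exfalso
  -- hz : 0 = T a b
  set P : Matrix (Fin d) (Fin d) ℝ := Matrix.of fun i j => μ i * ν j with hPdef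
  have hPpos : ∀ i j, 0 < P i j := fun i j => mul_pos (hμpos i) (hνpos j)
  have hPmem : P ∈ transportPolytope μ ν := by
    refine ⟨fun i j => (hPpos i j).le, fun i => ?_, fun j => ?_⟩
    · show ∑ j, μ i * ν j = μ i
      rw [← Finset.mul_sum, hν1, mul_one]
    · show ∑ i, μ i * ν j = ν j
      rw [← Finset.sum_mul, hμ1, one_mul]
  set S : ℝ → Matrix (Fin d) (Fin d) ℝ :=
    fun ε => Matrix.of fun i j => T i j + ε * (P i j - T i j) with hSdef
  have hSapp : ∀ ε i j, S ε i j = T i j + ε * (P i j - T i j) := fun _ _ _ => rfl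
  have hS0 : S 0 = T := by
    funext i j; simp [hSapp]
  have hSmem : ∀ ε : ℝ, 0 < ε → ε < 1 → S ε ∈ transportPolytope μ ν := by
    intro ε hε0 hε1
    refine ⟨fun i j => ?_, fun i => ?_, fun j => ?_⟩
    · have h1 : S ε i j = (1 - ε) * T i j + ε * P i j := by rw [hSapp]; ring
      rw [h1]
      have := hTmem.1 i j
      have := (hPpos i j).le
      nlinarith
    · rw [show (∑ j, S ε i j) = ∑ j, (T i j + ε * (P i j - T i j)) from rfl]
      rw [Finset.sum_add_distrib, ← Finset.mul_sum, Finset.sum_sub_distrib,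
        hTmem.2.1 i, hPmem.2.1 i]
      ring
    · rw [show (∑ i, S ε i j) = ∑ i, (T i j + ε * (P i j - T i j)) from rfl]
      rw [Finset.sum_add_distrib, ← Finset.mul_sum, Finset.sum_sub_distrib,
        hTmem.2.2 j, hPmem.2.2 j]
      ring
  set g : ℝ → ℝ := fun ε => frob (S ε) C - (1 / lam) * matEntropy (S ε) with hgdef
  set A : ℝ := ∑ p : Fin d × Fin d, (P p.1 p.2 - T p.1 p.2) * C p.1 p.2 with hAdef
  set c : ℝ := ∑ p : Fin d × Fin d, (if T p.1 p.2 = 0 then P p.1 p.2 else 0) with hcdef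
  have hc : 0 < c := by
    have hnn : ∀ p ∈ (Finset.univ : Finset (Fin d × Fin d)),
        (0:ℝ) ≤ (if T p.1 p.2 = 0 then P p.1 p.2 else 0) := by
      intro p _; split_ifs
      · exact (hPpos _ _).le
      · exact le_refl 0
    refine Finset.sum_pos' hnn ⟨(a, b), Finset.mem_univ _, ?_⟩
    simp only [← hz, if_pos rfl]
    exact hPpos a b
  -- key identity: g ε in expanded form
  have hkey : ∀ ε : ℝ, g ε = (frob T C + ε * A)
      + (1 / lam) * ∑ p : Fin d × Fin d, entFun (S ε p.1 p.2) := by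
    intro ε
    have hfr : frob (S ε) C = frob T C + ε * A := by
      rw [frob_pairs, frob_pairs, hAdef, Finset.mul_sum, ← Finset.sum_add_distrib]
      refine Finset.sum_congr rfl fun p _ => ?_
      rw [hSapp]; ring
    rw [hgdef]
    simp only
    rw [hfr, matEntropy_pairs]
    ring
  -- slope identity
  set r : ℝ → ℝ := fun ε => ∑ p : Fin d × Fin d,
      ((entFun (S ε p.1 p.2) - entFun (T p.1 p.2)) / ε
        - (if T p.1 p.2 = 0 then P p.1 p.2 * Real.log ε else 0)) with hrdef
  have hslope : ∀ ε : ℝ, 0 < ε →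
      g ε - g 0 = ε * (A + (1 / lam) * (c * Real.log ε + r ε)) := by
    intro ε hε
    have h1 : ε * r ε = (∑ p : Fin d × Fin d,
        (entFun (S ε p.1 p.2) - entFun (T p.1 p.2)))
        - ε * (c * Real.log ε) := by
      rw [hrdef]
      simp only
      rw [Finset.mul_sum, hcdef, Finset.sum_mul, Finset.mul_sum, ← Finset.sum_sub_distrib]
      refine Finset.sum_congr rfl fun p _ => ?_
      split_ifs <;> field_simp <;> ring
    have h2 := hkey ε
    have h3 := hkey 0
    rw [hS0] at h3
    have h4 : (∑ p : Fin d × Fin d, entFun (S ε p.1 p.2))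
        - (∑ p : Fin d × Fin d, entFun (T p.1 p.2))
        = ∑ p : Fin d × Fin d, (entFun (S ε p.1 p.2) - entFun (T p.1 p.2)) :=
      (Finset.sum_sub_distrib _ _).symm
    rw [h2, h3]
    have hlam' : lam ≠ 0 := hlam.ne'
    field_simp
    nlinarith [h1, h4]
  -- limit of r
  have hrt : Filter.Tendsto r (nhdsWithin 0 (Set.Ioi (0:ℝ)))
      (nhds (∑ p : Fin d × Fin d,
        (if T p.1 p.2 = 0 then P p.1 p.2 * Real.log (P p.1 p.2)
          else (Real.log (T p.1 p.2) + 1) * (P p.1 p.2 - T p.1 p.2)))) := by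
    rw [hrdef]
    apply tendsto_finset_sum
    intro p _
    by_cases hp : T p.1 p.2 = 0
    · simp only [hp, if_true]
      refine Filter.Tendsto.congr' ?_ (tendsto_const_nhds
        (x := P p.1 p.2 * Real.log (P p.1 p.2)))
      filter_upwards [self_mem_nhdsWithin] with ε hε
      have hε0 : (0:ℝ) < ε := hε
      have hPp := hPpos p.1 p.2
      rw [hSapp, hp]
      simp only [entFun, sub_zero, zero_add, Real.log_zero, mul_zero]
      rw [Real.log_mul hε0.ne' hPp.ne']
      field_simp
      ring
    · have hTp : 0 < T p.1 p.2 := lt_of_le_of_ne (hTmem.1 _ _) (Ne.symm hp)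
      simp only [hp, if_false]
      have hd1 : HasDerivAt (fun t : ℝ => T p.1 p.2 + t * (P p.1 p.2 - T p.1 p.2))
          (P p.1 p.2 - T p.1 p.2) 0 := by
        simpa using ((hasDerivAt_id (0:ℝ)).mul_const (P p.1 p.2 - T p.1 p.2)).const_add
          (T p.1 p.2)
      have hne : T p.1 p.2 + 0 * (P p.1 p.2 - T p.1 p.2) ≠ 0 := by
        simpa using hTp.ne'
      have hd2 := (Real.hasDerivAt_mul_log hne).comp 0 hd1
      rw [show T p.1 p.2 + 0 * (P p.1 p.2 - T p.1 p.2) = T p.1 p.2 by ring] at hd2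
      rw [hasDerivAt_iff_tendsto_slope] at hd2
      have hsub : Set.Ioi (0:ℝ) ⊆ {(0:ℝ)}ᶜ := fun x hx => ne_of_gt hx
      have hd3 := hd2.mono_left (nhdsWithin_mono 0 hsub)
      refine Filter.Tendsto.congr' ?_ hd3
      filter_upwards [self_mem_nhdsWithin] with ε hε
      have hε0 : (0:ℝ) < ε := hε
      rw [slope_def_field]
      simp only [Function.comp, hSapp, sub_zero, entFun]
      rw [show T p.1 p.2 + 0 * (P p.1 p.2 - T p.1 p.2) = T p.1 p.2 by ring]
  have htend : Filter.Tendsto (fun ε => A + (1 / lam) * (c * Real.log ε + r ε))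
      (nhdsWithin 0 (Set.Ioi (0:ℝ))) Filter.atBot := by
    apply Filter.tendsto_atBot_add_const_left
    apply Filter.Tendsto.const_mul_atBot (by positivity : (0:ℝ) < 1 / lam)
    exact (Filter.Tendsto.const_mul_atBot hc
      Real.tendsto_log_nhdsGT_zero).atBot_add hrt
  have hev1 := htend.eventually_lt_atBot 0
  have hev2 : Set.Ioo (0:ℝ) 1 ∈ nhdsWithin 0 (Set.Ioi (0:ℝ)) :=
    Ioo_mem_nhdsGT_of_mem (by constructor <;> norm_num)
  obtain ⟨ε, hq, hio⟩ := (hev1.and hev2).exists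
  have hε0 : 0 < ε := hio.1
  have hfe := hTmin (S ε) (hSmem ε hε0 hio.2)
  have hg0v : g 0 = frob T C - (1 / lam) * matEntropy T := by
    rw [hgdef]; simp only; rw [hS0]
  have hle : g 0 ≤ g ε := by rw [hg0v]; exact hfe
  have h5 := hslope ε hε0
  nlinarith [mul_neg_of_pos_of_neg hε0 hq]

lemma sinkhorn_cycle {d : ℕ} {μ ν : Fin d → ℝ}
    {C : Matrix (Fin d) (Fin d) ℝ} {lam : ℝ} (hlam : 0 < lam)
    {T : Matrix (Fin d) (Fin d) ℝ} (hTmem : T ∈ transportPolytope μ ν)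
    (hTmin : ∀ S ∈ transportPolytope μ ν,
      frob T C - (1 / lam) * matEntropy T ≤ frob S C - (1 / lam) * matEntropy S)
    (hpos : ∀ a b, 0 < T a b) :
    ∀ i i' j j' : Fin d,
      (lam * C i j + Real.log (T i j)) + (lam * C i' j' + Real.log (T i' j'))
        = (lam * C i j' + Real.log (T i j')) + (lam * C i' j + Real.log (T i' j)) := by
  intro i i' j j'
  set D : Fin d → Fin d → ℝ := fun p q =>
      (if p = i then (1:ℝ) else 0) * (if q = j then 1 else 0)
        + (if p = i' then 1 else 0) * (if q = j' then 1 else 0)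
        - (if p = i then 1 else 0) * (if q = j' then 1 else 0)
        - (if p = i' then 1 else 0) * (if q = j then 1 else 0) with hDdef
  have hDabs : ∀ p q, |D p q| ≤ 1 := by
    intro p q
    simp only [hDdef]
    split_ifs <;> norm_num
  have hDrow : ∀ p, ∑ q, D p q = 0 := by
    intro p
    simp only [hDdef]
    simp [Finset.sum_add_distrib, Finset.sum_sub_distrib, ← Finset.mul_sum]
  have hDcol : ∀ q, ∑ p, D p q = 0 := by
    intro q
    simp only [hDdef]
    simp [Finset.sum_add_distrib, Finset.sum_sub_distrib, ← Finset.sum_mul]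
  have hDsum : ∀ X : Fin d → Fin d → ℝ,
      ∑ p : Fin d × Fin d, D p.1 p.2 * X p.1 p.2
        = X i j + X i' j' - X i j' - X i' j := by
    intro X
    rw [Fintype.sum_prod_type]; simp only [hDdef]
    simp [add_mul, sub_mul, ite_mul, mul_ite, Finset.sum_add_distrib,
      Finset.sum_sub_distrib]
  -- a uniform positive lower bound on entries of T
  have hne : (Finset.univ : Finset (Fin d × Fin d)).Nonempty := ⟨(i, j), Finset.mem_univ _⟩
  set m : ℝ := Finset.inf' Finset.univ hne (fun p : Fin d × Fin d => T p.1 p.2) with hmdef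
  have hmle : ∀ p q, m ≤ T p q := fun p q =>
    Finset.inf'_le _ (Finset.mem_univ (p, q))
  have hm : 0 < m := by
    rw [hmdef, Finset.lt_inf'_iff]
    exact fun p _ => hpos p.1 p.2
  -- the perturbed matrices
  set W : ℝ → Matrix (Fin d) (Fin d) ℝ :=
    fun t => Matrix.of fun p q => T p q + t * D p q with hWdef
  have hWapp : ∀ t p q, W t p q = T p q + t * D p q := fun _ _ _ => rfl
  have hW0 : W 0 = T := by funext p q; simp [hWapp]
  have hWmem : ∀ t : ℝ, |t| < m → W t ∈ transportPolytope μ ν := by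
    intro t ht
    refine ⟨fun p q => ?_, fun p => ?_, fun q => ?_⟩
    · rw [hWapp]
      have h1 : |t * D p q| ≤ |t| := by
        rw [abs_mul]
        exact mul_le_of_le_one_right (abs_nonneg t) (hDabs p q)
      have h2 := neg_abs_le (t * D p q)
      have h3 := hmle p q
      linarith
    · rw [show (∑ q, W t p q) = ∑ q, (T p q + t * D p q) from rfl]
      rw [Finset.sum_add_distrib, ← Finset.mul_sum, hDrow p, hTmem.2.1 p]
      ring
    · rw [show (∑ p, W t p q) = ∑ p, (T p q + t * D p q) from rfl]
      rw [Finset.sum_add_distrib, ← Finset.mul_sum, hDcol q, hTmem.2.2 q]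
      ring
  set g : ℝ → ℝ := fun t => frob (W t) C - (1 / lam) * matEntropy (W t) with hgdef
  have hg0 : g 0 = frob T C - (1 / lam) * matEntropy T := by
    rw [hgdef]; simp only; rw [hW0]
  have hloc : IsLocalMin g 0 := by
    have hball : Set.Ioo (-m) m ∈ nhds (0:ℝ) := Ioo_mem_nhds (neg_lt_zero.mpr hm) hm
    refine Filter.eventually_of_mem hball fun t ht => ?_
    rw [hg0]
    exact hTmin (W t) (hWmem t (abs_lt.mpr ⟨ht.1, ht.2⟩))
  -- derivative of g at 0
  have hd1 : HasDerivAt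
      (fun t : ℝ => ∑ p : Fin d × Fin d, (T p.1 p.2 + t * D p.1 p.2) * C p.1 p.2)
      (∑ p : Fin d × Fin d, D p.1 p.2 * C p.1 p.2) 0 := by
    refine HasDerivAt.fun_sum fun p _ => ?_
    have := (((hasDerivAt_id (0:ℝ)).mul_const (D p.1 p.2)).const_add
      (T p.1 p.2)).mul_const (C p.1 p.2)
    simpa using this
  have hd2 : HasDerivAt
      (fun t : ℝ => ∑ p : Fin d × Fin d, entFun (T p.1 p.2 + t * D p.1 p.2))
      (∑ p : Fin d × Fin d, D p.1 p.2 * (Real.log (T p.1 p.2) + 1)) 0 := by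
    refine HasDerivAt.fun_sum fun p _ => ?_
    have hin : HasDerivAt (fun t : ℝ => T p.1 p.2 + t * D p.1 p.2) (D p.1 p.2) 0 := by
      simpa using ((hasDerivAt_id (0:ℝ)).mul_const (D p.1 p.2)).const_add (T p.1 p.2)
    have hne0 : T p.1 p.2 + 0 * D p.1 p.2 ≠ 0 := by
      simpa using (hpos p.1 p.2).ne'
    have hcomp := (Real.hasDerivAt_mul_log hne0).comp 0 hin
    rw [show T p.1 p.2 + 0 * D p.1 p.2 = T p.1 p.2 by ring] at hcomp
    have : HasDerivAt (fun t : ℝ => entFun (T p.1 p.2 + t * D p.1 p.2))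
        ((Real.log (T p.1 p.2) + 1) * D p.1 p.2) 0 := hcomp
    simpa [mul_comm] using this
  have hgeq : g = fun t : ℝ =>
      (∑ p : Fin d × Fin d, (T p.1 p.2 + t * D p.1 p.2) * C p.1 p.2)
        + (1 / lam) * ∑ p : Fin d × Fin d, entFun (T p.1 p.2 + t * D p.1 p.2) := by
    funext t
    rw [hgdef]
    simp only
    rw [frob_pairs, matEntropy_pairs]
    have : ∀ p : Fin d × Fin d, W t p.1 p.2 = T p.1 p.2 + t * D p.1 p.2 :=
      fun p => rfl
    simp only [this]
    ring
  have hd : HasDerivAt g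
      ((∑ p : Fin d × Fin d, D p.1 p.2 * C p.1 p.2)
        + (1 / lam) * ∑ p : Fin d × Fin d, D p.1 p.2 * (Real.log (T p.1 p.2) + 1)) 0 := by
    rw [hgeq]
    exact hd1.add (hd2.const_mul (1 / lam))
  have hzero := hloc.hasDerivAt_eq_zero hd
  rw [hDsum C, hDsum (fun p q => Real.log (T p q) + 1)] at hzero
  have hlam' : lam ≠ 0 := hlam.ne'
  field_simp at hzero
  linarith

/-- Sinkhorn algorithm (Theorem 1): with `G = exp(−λC)` entrywise, the unique
minimizer of the entropy-regularized problem factors as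
`T* = diag(u) · G · diag(v)` with `u, v` having strictly positive entries. -/
theorem stmt_7 (d : ℕ) (hd : 1 ≤ d) (μ ν : Fin d → ℝ)
    (hμ : μ ∈ probSimplex d) (hν : ν ∈ probSimplex d)
    (hμpos : ∀ i, 0 < μ i) (hνpos : ∀ j, 0 < ν j)
    (C : Matrix (Fin d) (Fin d) ℝ) (lam : ℝ) (hlam : 0 < lam)
    (G : Matrix (Fin d) (Fin d) ℝ)
    (hG : ∀ i j, G i j = Real.exp (-lam * C i j))
    (Tstar : Matrix (Fin d) (Fin d) ℝ) (hTmem : Tstar ∈ transportPolytope μ ν)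
    (hTmin : ∀ S ∈ transportPolytope μ ν,
      frob Tstar C - (1 / lam) * matEntropy Tstar ≤
        frob S C - (1 / lam) * matEntropy S) :
    ∃ u v : Fin d → ℝ, (∀ i, 0 < u i) ∧ (∀ j, 0 < v j) ∧
      Tstar = Matrix.diagonal u * G * Matrix.diagonal v := by
  obtain ⟨hμ0, hμ1⟩ := hμ
  obtain ⟨hν0, hν1⟩ := hν
  have hpos := sinkhorn_pos hμ1 hν1 hμpos hνpos hlam hTmem hTmin
  have hcyc := sinkhorn_cycle hlam hTmem hTmin hpos
  set i0 : Fin d := ⟨0, hd⟩ with hi0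
  set F : Fin d → Fin d → ℝ := fun i j => lam * C i j + Real.log (Tstar i j) with hF
  refine ⟨fun i => Real.exp (F i i0 - F i0 i0), fun j => Real.exp (F i0 j),
    fun i => Real.exp_pos _, fun j => Real.exp_pos _, ?_⟩
  funext i j
  rw [Matrix.mul_diagonal, Matrix.diagonal_mul, hG i j]
  rw [← Real.exp_add, ← Real.exp_add, ← Real.exp_log (hpos i j)]
  congr 1
  have hc := hcyc i i0 j i0
  simp only [hF]
  linarith
end

section
/- Suppose μ, ν ∈ Δ_d, C ∈ ℝ^{d×d}, λ > 0, G_{ij} = exp(−λ C_{ij}), u, v ∈ ℝ^d have strictly positive entries, and T = diag(u) · G · diag(v) belongs to Π(μ, ν). Then for every S ∈ Π(μ, ν), (⟨S, C⟩ − (1/λ)·H(S)) − (⟨T, C⟩ − (1/λ)·H(T)) = (1/λ) · Σ_{i,j} S_{ij} · log(S_{ij} / T_{ij}), where terms with S_{ij} = 0 are interpreted as 0. -/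
open Finset

/-- If `T = diag(u) · G · diag(v) ∈ Π(μ, ν)` with `G = exp(−λC)` entrywise and
`u, v` positive, then for any `S ∈ Π(μ, ν)` the excess regularized cost of `S`
over `T` equals `(1/λ) · Σ_{i,j} S_{ij} log(S_{ij}/T_{ij})` (terms with
`S_{ij} = 0` are `0` since `Real.log 0 = 0`). -/
theorem stmt_9 (d : ℕ) (hd : 1 ≤ d) (μ ν : Fin d → ℝ)
    (hμ : μ ∈ probSimplex d) (hν : ν ∈ probSimplex d)
    (C : Matrix (Fin d) (Fin d) ℝ) (lam : ℝ) (hlam : 0 < lam)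
    (G : Matrix (Fin d) (Fin d) ℝ)
    (hG : ∀ i j, G i j = Real.exp (-lam * C i j))
    (u v : Fin d → ℝ) (hu : ∀ i, 0 < u i) (hv : ∀ j, 0 < v j)
    (T : Matrix (Fin d) (Fin d) ℝ)
    (hT : T = Matrix.diagonal u * G * Matrix.diagonal v)
    (hTmem : T ∈ transportPolytope μ ν) :
    ∀ S ∈ transportPolytope μ ν,
      (frob S C - (1 / lam) * matEntropy S) -
          (frob T C - (1 / lam) * matEntropy T) =
        (1 / lam) * ∑ i, ∑ j, S i j * Real.log (S i j / T i j) := by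
  intro S hS
  obtain ⟨hS0, hSr, hSc⟩ := hS
  obtain ⟨hT0, hTr, hTc⟩ := hTmem
  have hTval : ∀ i j, T i j = u i * Real.exp (-lam * C i j) * v j := by
    intro i j
    rw [hT, Matrix.mul_apply]
    simp [Matrix.mul_diagonal, Matrix.diagonal_apply, Finset.sum_ite_eq',
      Finset.mul_sum, hG]
  have hTpos : ∀ i j, 0 < T i j := by
    intro i j; rw [hTval]
    exact mul_pos (mul_pos (hu i) (Real.exp_pos _)) (hv j)
  have hlogT : ∀ i j, Real.log (T i j) =
      Real.log (u i) + Real.log (v j) - lam * C i j := by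
    intro i j
    rw [hTval i j, Real.log_mul (mul_pos (hu i) (Real.exp_pos _)).ne' (hv j).ne',
      Real.log_mul (hu i).ne' (Real.exp_ne_zero _), Real.log_exp]
    ring
  -- key sum identity for any matrix with the right marginals
  have key : ∀ (R : Matrix (Fin d) (Fin d) ℝ),
      (∀ i, ∑ j, R i j = μ i) → (∀ j, ∑ i, R i j = ν j) →
      ∑ i, ∑ j, R i j * Real.log (T i j) =
        ∑ i, μ i * Real.log (u i) + ∑ j, ν j * Real.log (v j)
          - lam * frob R C := by
    intro R hr hc
    have step : ∑ i, ∑ j, R i j * Real.log (T i j) =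
        ∑ i, ∑ j, (R i j * Real.log (u i) + R i j * Real.log (v j)
          - lam * (R i j * C i j)) := by
      refine Finset.sum_congr rfl fun i _ => Finset.sum_congr rfl fun j _ => ?_
      rw [hlogT]; ring
    rw [step]
    have e1 : ∑ i, ∑ j, R i j * Real.log (u i) = ∑ i, μ i * Real.log (u i) := by
      refine Finset.sum_congr rfl fun i _ => ?_
      rw [← Finset.sum_mul, hr]
    have e2 : ∑ i, ∑ j, R i j * Real.log (v j) = ∑ j, ν j * Real.log (v j) := by
      rw [Finset.sum_comm]
      refine Finset.sum_congr rfl fun j _ => ?_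
      rw [← Finset.sum_mul, hc]
    have e3 : ∑ i, ∑ j, lam * (R i j * C i j) = lam * frob R C := by
      simp [frob, Finset.mul_sum]
    calc ∑ i, ∑ j, (R i j * Real.log (u i) + R i j * Real.log (v j)
          - lam * (R i j * C i j))
        = (∑ i, ∑ j, R i j * Real.log (u i))
          + (∑ i, ∑ j, R i j * Real.log (v j))
          - ∑ i, ∑ j, lam * (R i j * C i j) := by
          simp [Finset.sum_add_distrib, Finset.sum_sub_distrib]
      _ = _ := by rw [e1, e2, e3]
  have hrhs : ∑ i, ∑ j, S i j * Real.log (S i j / T i j) =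
      (∑ i, ∑ j, S i j * Real.log (S i j)) -
        ∑ i, ∑ j, S i j * Real.log (T i j) := by
    rw [← Finset.sum_sub_distrib]
    refine Finset.sum_congr rfl fun i _ => ?_
    rw [← Finset.sum_sub_distrib]
    refine Finset.sum_congr rfl fun j _ => ?_
    rcases eq_or_lt_of_le (hS0 i j) with h | h
    · simp [← h]
    · rw [Real.log_div h.ne' (hTpos i j).ne']; ring
  have h1 := key S hSr hSc
  have h2 := key T hTr hTc
  have hkey : ∑ i, ∑ j, S i j * Real.log (T i j)
      - ∑ i, ∑ j, T i j * Real.log (T i j)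
      = lam * frob T C - lam * frob S C := by linarith
  unfold matEntropy
  rw [hrhs]
  field_simp
  nlinarith [hkey, hlam.ne']
end

section
/- Suppose μ, ν ∈ Δ_d, C ∈ ℝ^{d×d}, λ > 0, G_{ij} = exp(−λ C_{ij}), u, v ∈ ℝ^d have strictly positive entries, and T = diag(u) · G · diag(v) belongs to Π(μ, ν). Then T is the unique minimizer of ⟨S, C⟩ − (1/λ)·H(S) over S ∈ Π(μ, ν): every S ∈ Π(μ, ν) with S ≠ T satisfies ⟨S, C⟩ − (1/λ)·H(S) > ⟨T, C⟩ − (1/λ)·H(T). -/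
open Finset

lemma ent_le (s t : ℝ) (hs : 0 ≤ s) (ht : 0 < t) :
    s - t ≤ s * Real.log s - s * Real.log t := by
  rcases eq_or_lt_of_le hs with h | h
  · simp [← h]; linarith
  · have h1 := Real.log_le_sub_one_of_pos (div_pos ht h)
    rw [Real.log_div ht.ne' h.ne'] at h1
    have hc : s * (t / s) = t := by field_simp
    nlinarith [mul_le_mul_of_nonneg_left h1 h.le]

lemma ent_lt (s t : ℝ) (hs : 0 ≤ s) (ht : 0 < t) (hne : s ≠ t) :
    s - t < s * Real.log s - s * Real.log t := by
  rcases eq_or_lt_of_le hs with h | h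
  · simp [← h]; linarith
  · have hts : t / s ≠ 1 := by
      intro hx
      exact hne ((div_eq_one_iff_eq h.ne').mp hx).symm
    have h1 := Real.log_lt_sub_one_of_pos (div_pos ht h) hts
    rw [Real.log_div ht.ne' h.ne'] at h1
    have hc : s * (t / s) = t := by field_simp
    nlinarith [mul_lt_mul_of_pos_left h1 h]

/-- If `T = diag(u) · G · diag(v) ∈ Π(μ, ν)` with `G = exp(−λC)` entrywise and
`u, v` positive, then `T` is the unique minimizer of the entropy-regularized
objective over `Π(μ, ν)`. -/
theorem stmt_10 (d : ℕ) (hd : 1 ≤ d) (μ ν : Fin d → ℝ)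
    (hμ : μ ∈ probSimplex d) (hν : ν ∈ probSimplex d)
    (C : Matrix (Fin d) (Fin d) ℝ) (lam : ℝ) (hlam : 0 < lam)
    (G : Matrix (Fin d) (Fin d) ℝ)
    (hG : ∀ i j, G i j = Real.exp (-lam * C i j))
    (u v : Fin d → ℝ) (hu : ∀ i, 0 < u i) (hv : ∀ j, 0 < v j)
    (T : Matrix (Fin d) (Fin d) ℝ)
    (hT : T = Matrix.diagonal u * G * Matrix.diagonal v)
    (hTmem : T ∈ transportPolytope μ ν) :
    ∀ S ∈ transportPolytope μ ν, S ≠ T →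
      frob T C - (1 / lam) * matEntropy T <
        frob S C - (1 / lam) * matEntropy S := by
  intro S hS hne
  obtain ⟨hSnn, hSrow, hScol⟩ := hS
  obtain ⟨hTnn, hTrow, hTcol⟩ := hTmem
  have hTentry : ∀ i j, T i j = u i * G i j * v j := by
    intro i j
    rw [hT]
    simp [Matrix.mul_diagonal, Matrix.diagonal_mul]
  have hTpos : ∀ i j, 0 < T i j := by
    intro i j
    rw [hTentry, hG]
    exact mul_pos (mul_pos (hu i) (Real.exp_pos _)) (hv j)
  have hlogT : ∀ i j, Real.log (T i j)
      = Real.log (u i) + Real.log (v j) + (-lam * C i j) := by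
    intro i j
    rw [hTentry, hG]
    rw [Real.log_mul (mul_pos (hu i) (Real.exp_pos _)).ne' (hv j).ne',
        Real.log_mul (hu i).ne' (Real.exp_pos _).ne', Real.log_exp]
    ring
  have hC : ∀ i j, C i j
      = (1 / lam) * (Real.log (u i) + Real.log (v j) - Real.log (T i j)) := by
    intro i j
    rw [hlogT i j]
    field_simp
    ring
  have key : ∀ R : Matrix (Fin d) (Fin d) ℝ,
      (∀ i j, 0 ≤ R i j) → (∀ i, ∑ j, R i j = μ i) → (∀ j, ∑ i, R i j = ν j) →
      frob R C - (1 / lam) * matEntropy R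
        = (1 / lam) * ((∑ i, μ i * Real.log (u i)) + ∑ j, ν j * Real.log (v j))
          + (1 / lam) *
            ∑ i, ∑ j, (R i j * Real.log (R i j) - R i j * Real.log (T i j)) := by
    intro R hRnn hRrow hRcol
    have e2 : ∑ i, ∑ j, R i j * Real.log (u i) = ∑ i, μ i * Real.log (u i) := by
      refine Finset.sum_congr rfl fun i _ => ?_
      rw [← Finset.sum_mul, hRrow]
    have e3 : ∑ i, ∑ j, R i j * Real.log (v j) = ∑ j, ν j * Real.log (v j) := by
      rw [Finset.sum_comm]
      refine Finset.sum_congr rfl fun j _ => ?_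
      rw [← Finset.sum_mul, hRcol]
    have e1 : frob R C = (1 / lam) *
        ((∑ i, ∑ j, R i j * Real.log (u i)) + (∑ i, ∑ j, R i j * Real.log (v j))
          - ∑ i, ∑ j, R i j * Real.log (T i j)) := by
      unfold frob
      rw [← Finset.sum_add_distrib, ← Finset.sum_sub_distrib, Finset.mul_sum]
      refine Finset.sum_congr rfl fun i _ => ?_
      rw [← Finset.sum_add_distrib, ← Finset.sum_sub_distrib, Finset.mul_sum]
      refine Finset.sum_congr rfl fun j _ => ?_
      rw [hC i j]
      ring
    rw [e1, e2, e3]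
    unfold matEntropy
    rw [show ∑ i, ∑ j, (R i j * Real.log (R i j) - R i j * Real.log (T i j))
        = (∑ i, ∑ j, R i j * Real.log (R i j))
          - ∑ i, ∑ j, R i j * Real.log (T i j) by
      rw [← Finset.sum_sub_distrib]
      exact Finset.sum_congr rfl fun i _ => by rw [← Finset.sum_sub_distrib]]
    ring
  have hzero : ∑ i, ∑ j, (T i j * Real.log (T i j) - T i j * Real.log (T i j))
      = 0 := by simp
  have hex : ∃ i j, S i j ≠ T i j := by
    by_contra hco
    push_neg at hco
    exact hne (by ext i j; exact hco i j)
  obtain ⟨i0, j0, hij⟩ := hex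
  have hsum : (0 : ℝ) <
      ∑ i, ∑ j, (S i j * Real.log (S i j) - S i j * Real.log (T i j)) := by
    have h0 : ∑ i, ∑ j, (S i j - T i j) = 0 := by
      simp [Finset.sum_sub_distrib, hSrow, hTrow]
    rw [← h0, ← Fintype.sum_prod_type', ← Fintype.sum_prod_type']
    refine Finset.sum_lt_sum (fun p _ => ent_le _ _ (hSnn p.1 p.2) (hTpos p.1 p.2))
      ⟨(i0, j0), Finset.mem_univ _, ent_lt _ _ (hSnn i0 j0) (hTpos i0 j0) hij⟩
  rw [key S hSnn hSrow hScol, key T hTnn hTrow hTcol, hzero]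
  have := mul_pos (by positivity : (0:ℝ) < 1 / lam) hsum
  linarith
end

section
/- Suppose G ∈ ℝ^{d×d} has all entries strictly positive and u, v, u', v' ∈ ℝ^d have strictly positive entries. If diag(u) · G · diag(v) = diag(u') · G · diag(v'), then there exists t > 0 such that u'_i = t · u_i and v'_j = v_j / t for all i, j; that is, the scaling vectors in the Sinkhorn factorization are unique up to a common multiplicative constant. -/
open Finset

/-- The Sinkhorn scaling vectors are unique up to a common multiplicative
constant. -/
theorem stmt_11 (d : ℕ) (hd : 1 ≤ d)
    (G : Matrix (Fin d) (Fin d) ℝ) (hG : ∀ i j, 0 < G i j)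
    (u v u' v' : Fin d → ℝ)
    (hu : ∀ i, 0 < u i) (hv : ∀ j, 0 < v j)
    (hu' : ∀ i, 0 < u' i) (hv' : ∀ j, 0 < v' j)
    (heq : Matrix.diagonal u * G * Matrix.diagonal v =
      Matrix.diagonal u' * G * Matrix.diagonal v') :
    ∃ t : ℝ, 0 < t ∧ (∀ i, u' i = t * u i) ∧ ∀ j, v' j = v j / t := by
  have key : ∀ i j, u i * G i j * v j = u' i * G i j * v' j := by
    intro i j
    have := congrFun (congrFun heq i) j
    simpa [Matrix.mul_apply, Matrix.diagonal, Finset.mul_sum, mul_comm,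
      mul_assoc, mul_left_comm] using this
  have key2 : ∀ i j, u i * v j = u' i * v' j := by
    intro i j
    have h := key i j
    have hg := (hG i j).ne'
    apply mul_right_cancel₀ hg
    linear_combination h
  have i0 : Fin d := ⟨0, hd⟩
  refine ⟨u' i0 / u i0, div_pos (hu' i0) (hu i0), ?_, ?_⟩
  · intro i
    have h1 := key2 i i0
    have h2 := key2 i0 i0
    have := (hu i0).ne'
    have := (hu' i0).ne'
    field_simp
    have h3 : v' i0 * (u' i * u i0 - u' i0 * u i) = 0 := by
      linear_combination u i * h2 - u i0 * h1
    have h4 := (mul_eq_zero.mp h3).resolve_left (hv' i0).ne'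
    linarith [sub_eq_zero.mp h4]
  · intro j
    have h1 := key2 i0 j
    have := (hu i0).ne'
    have := (hu' i0).ne'
    field_simp
    nlinarith [h1]
end

section
/- For any probability vectors μ, ν ∈ Δ_d, any cost matrix C ∈ ℝ^{d×d}, and any λ > 0, the Sinkhorn cost approximates the optimal transport cost with error at most (2·log d)/λ: η_C − (2·log d)/λ ≤ η_C^λ ≤ η_C, where η_C = min_{T ∈ Π(μ,ν)} ⟨T, C⟩ and η_C^λ = min_{T ∈ Π(μ,ν)} (⟨T, C⟩ − (1/λ)·H(T)). In particular, η_C^λ → η_C as λ → ∞. -/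
open Finset

/-- Jensen's inequality for entropy: a probability vector on a finite type has
entropy at most `log (card ι)`. -/
lemma sum_negMulLog_le_log_card {ι : Type*} [Fintype ι] (hι : 0 < Fintype.card ι)
    (p : ι → ℝ) (hp : ∀ i, 0 ≤ p i) (hs : ∑ i, p i = 1) :
    ∑ i, Real.negMulLog (p i) ≤ Real.log (Fintype.card ι) := by
  set n := Fintype.card ι with hn_def
  have hn : (0:ℝ) < n := by exact_mod_cast hι
  have h := Real.concaveOn_negMulLog.le_map_sum (t := Finset.univ)
    (w := fun _ : ι => (n:ℝ)⁻¹) (p := p)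
    (fun i _ => by positivity)
    (by rw [Finset.sum_const]; simp only [nsmul_eq_mul, Finset.card_univ, ← hn_def]
        field_simp)
    (fun i _ => Set.mem_Ici.mpr (hp i))
  simp only [smul_eq_mul, ← Finset.mul_sum, hs, mul_one] at h
  have hneg : Real.negMulLog ((n:ℝ)⁻¹) = (n:ℝ)⁻¹ * Real.log n := by
    simp [Real.negMulLog, Real.log_inv]
  rw [hneg] at h
  exact le_of_mul_le_mul_left h (inv_pos.mpr hn) |>.trans_eq rfl

/-- The Sinkhorn cost `η_C^λ` approximates the optimal transport cost `η_C`: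
`η_C − (2 log d)/λ ≤ η_C^λ ≤ η_C`, and `η_C^λ → η_C` as `λ → ∞`. -/
theorem stmt_13 (d : ℕ) (hd : 1 ≤ d) (μ ν : Fin d → ℝ)
    (hμ : μ ∈ probSimplex d) (hν : ν ∈ probSimplex d)
    (C : Matrix (Fin d) (Fin d) ℝ) (lam : ℝ) (hlam : 0 < lam) :
    (sInf ((fun T => frob T C) '' transportPolytope μ ν) -
          (2 * Real.log d) / lam ≤
        sInf ((fun T => frob T C - (1 / lam) * matEntropy T) ''
          transportPolytope μ ν) ∧
      sInf ((fun T => frob T C - (1 / lam) * matEntropy T) ''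
          transportPolytope μ ν) ≤
        sInf ((fun T => frob T C) '' transportPolytope μ ν)) ∧
    Filter.Tendsto
      (fun l : ℝ => sInf ((fun T => frob T C - (1 / l) * matEntropy T) ''
        transportPolytope μ ν))
      Filter.atTop
      (nhds (sInf ((fun T => frob T C) '' transportPolytope μ ν))) := by
  obtain ⟨hμ0, hμ1⟩ := hμ
  obtain ⟨hν0, hν1⟩ := hν
  set S := transportPolytope μ ν with hS
  -- nonemptiness
  have hSne : S.Nonempty := by
    refine ⟨fun i j => μ i * ν j, fun i j => mul_nonneg (hμ0 i) (hν0 j),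
      fun i => ?_, fun j => ?_⟩
    · rw [← Finset.mul_sum, hν1, mul_one]
    · rw [← Finset.sum_mul, hμ1, one_mul]
  -- entries bounded by 1
  have hT1 : ∀ T ∈ S, ∀ i j, T i j ≤ 1 := by
    rintro T ⟨h0, hr, hc⟩ i j
    calc T i j ≤ ∑ j', T i j' :=
          Finset.single_le_sum (fun j' _ => h0 i j') (Finset.mem_univ j)
      _ = μ i := hr i
      _ ≤ ∑ i', μ i' := Finset.single_le_sum (fun i' _ => hμ0 i') (Finset.mem_univ i)
      _ = 1 := hμ1
  -- entropy as sum of negMulLog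
  have hent : ∀ T : Matrix (Fin d) (Fin d) ℝ,
      matEntropy T = ∑ i, ∑ j, Real.negMulLog (T i j) := by
    intro T
    simp [matEntropy, Real.negMulLog, ← Finset.sum_neg_distrib]
  -- entropy nonneg
  have hHnn : ∀ T ∈ S, 0 ≤ matEntropy T := by
    intro T hT
    rw [hent]
    refine Finset.sum_nonneg fun i _ => Finset.sum_nonneg fun j _ => ?_
    exact Real.negMulLog_nonneg (hT.1 i j) (hT1 T hT i j)
  -- entropy upper bound
  have hHub : ∀ T ∈ S, matEntropy T ≤ 2 * Real.log d := by
    intro T hT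
    have hcard : 0 < Fintype.card (Fin d × Fin d) := by
      simp; omega
    have hsum : ∑ ij : Fin d × Fin d, T ij.1 ij.2 = 1 := by
      rw [Fintype.sum_prod_type]
      calc ∑ i, ∑ j, T i j = ∑ i, μ i := by
            exact Finset.sum_congr rfl fun i _ => hT.2.1 i
        _ = 1 := hμ1
    have h := sum_negMulLog_le_log_card hcard (fun ij => T ij.1 ij.2)
      (fun ij => hT.1 ij.1 ij.2) hsum
    rw [Fintype.sum_prod_type] at h
    rw [hent]
    refine h.trans ?_
    have : (Fintype.card (Fin d × Fin d) : ℝ) = (d : ℝ) * d := by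
      simp [Fintype.card_prod]
    rw [this, Real.log_mul (by positivity : (d:ℝ) ≠ 0) (by positivity : (d:ℝ) ≠ 0)]
    ring_nf
    exact le_refl _
  -- frob lower bound
  set B : ℝ := ∑ i, ∑ j, |C i j| with hB
  have hfrob_lb : ∀ T ∈ S, -B ≤ frob T C := by
    intro T hT
    rw [hB, frob, ← Finset.sum_neg_distrib]
    refine Finset.sum_le_sum fun i _ => ?_
    rw [← Finset.sum_neg_distrib]
    refine Finset.sum_le_sum fun j _ => ?_
    have h0 := hT.1 i j
    have h1 := hT1 T hT i j
    have h2 := neg_abs_le (C i j)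
    have h3 := abs_nonneg (C i j)
    nlinarith
  -- bddBelow of both images
  have hBbdd : BddBelow ((fun T => frob T C) '' S) := by
    refine ⟨-B, ?_⟩
    rintro _ ⟨T, hT, rfl⟩
    exact hfrob_lb T hT
  have hAbdd : ∀ l : ℝ, 0 < l →
      BddBelow ((fun T => frob T C - (1 / l) * matEntropy T) '' S) := by
    intro l hl
    refine ⟨-B - (2 * Real.log d) / l, ?_⟩
    rintro _ ⟨T, hT, rfl⟩
    have h1 := hfrob_lb T hT
    have h2 : (1 / l) * matEntropy T ≤ (2 * Real.log d) / l := by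
      rw [one_div, div_eq_inv_mul]
      exact mul_le_mul_of_nonneg_left (hHub T hT) (by positivity)
    simp only
    linarith
  -- key inequalities for any l > 0
  have key : ∀ l : ℝ, 0 < l →
      sInf ((fun T => frob T C) '' S) - (2 * Real.log d) / l ≤
        sInf ((fun T => frob T C - (1 / l) * matEntropy T) '' S) ∧
      sInf ((fun T => frob T C - (1 / l) * matEntropy T) '' S) ≤
        sInf ((fun T => frob T C) '' S) := by
    intro l hl
    constructor
    · refine le_csInf (hSne.image _) ?_
      rintro _ ⟨T, hT, rfl⟩
      have h1 : sInf ((fun T => frob T C) '' S) ≤ frob T C :=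
        csInf_le hBbdd ⟨T, hT, rfl⟩
      have h2 : (1 / l) * matEntropy T ≤ (2 * Real.log d) / l := by
        rw [one_div, div_eq_inv_mul]
        exact mul_le_mul_of_nonneg_left (hHub T hT) (by positivity)
      simp only
      linarith
    · refine le_csInf (hSne.image _) ?_
      rintro _ ⟨T, hT, rfl⟩
      have h1 : sInf ((fun T => frob T C - (1 / l) * matEntropy T) '' S) ≤
          frob T C - (1 / l) * matEntropy T :=
        csInf_le (hAbdd l hl) ⟨T, hT, rfl⟩
      have h2 : 0 ≤ (1 / l) * matEntropy T :=
        mul_nonneg (by positivity) (hHnn T hT)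
      simp only
      linarith
  refine ⟨key lam hlam, ?_⟩
  -- squeeze for tendsto
  have hlow : Filter.Tendsto
      (fun l : ℝ => sInf ((fun T => frob T C) '' S) - (2 * Real.log d) / l)
      Filter.atTop (nhds (sInf ((fun T => frob T C) '' S))) := by
    have h0 : Filter.Tendsto (fun l : ℝ => (2 * Real.log d) / l)
        Filter.atTop (nhds 0) :=
      Filter.Tendsto.div_atTop tendsto_const_nhds Filter.tendsto_id
    simpa using tendsto_const_nhds.sub h0
  refine tendsto_of_tendsto_of_tendsto_of_le_of_le' hlow tendsto_const_nhds ?_ ?_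
  · filter_upwards [Filter.eventually_gt_atTop (0:ℝ)] with l hl
    exact (key l hl).1
  · filter_upwards [Filter.eventually_gt_atTop (0:ℝ)] with l hl
    exact (key l hl).2
end
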